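/- Let n ≥ 2 be even, d ≥ 1, 0 < ε ≤ 1/3, fix a bipartition of {1,…,n} into two sets of size n/2, and let B_{n,d} denote the set of simple d-regular bipartite graphs on {1,…,n} with that bipartition. If ℱ is a family of functions from {−1,1}^n to ℝ such that every G ∈ B_{n,d} has some f ∈ ℱ with (1−ε)·xᵀL_G x ≤ f(x) ≤ (1+ε)·xᵀL_G x for all x ∈ {−1,1}^n, then |ℱ| ≥ |B_{n,d}| / 2^(dn/2 + 9·d^(3/2)·ε·n·log₂ n). -/

import Mathlib

open Matrix

/-- The Laplacian quadratic form `xᵀ L_G x` of a simple graph `G` on vertex set `Fin n`. -/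
noncomputable def lapQuadForm {n : ℕ} (G : SimpleGraph (Fin n)) (x : Fin n → ℝ) : ℝ :=
  letI := Classical.decRel G.Adj
  x ⬝ᵥ (G.lapMatrix ℝ *ᵥ x)

/-- `G` is `d`-regular: every vertex has degree `d`. -/
def IsRegOfDeg {n : ℕ} (G : SimpleGraph (Fin n)) (d : ℕ) : Prop :=
  letI := Classical.decRel G.Adj
  G.IsRegularOfDegree d

/-- `G` is bipartite with bipartition `L ∪ Lᶜ`: every edge has one endpoint in `L` and one
outside `L`. -/
def IsBipartiteWith {n : ℕ} (G : SimpleGraph (Fin n)) (L : Set (Fin n)) : Prop :=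
  ∀ u v, G.Adj u v → (u ∈ L ↔ v ∉ L)

/-!
Two graphs `G, H ∈ B_{n,d}` with a common `ε`-cut sketch have nearly equal Laplacian forms,
so `xᵀ (A_H - A_G) x ≤ 4εdn` for every sign vector `x`. The matrix `M = A_H - A_G` is
supported on `L × Lᶜ ∪ Lᶜ × L`; taking `x = σ` off `L` and `x_u = sign (Mσ)_u` on `L` makes
`xᵀ M x = 2 ∑_{u ∈ L} |(Mσ)_u|`. By Khintchine's inequality (constant `1/√3`, from the second
and fourth moments) some sign vector `σ` has `∑_{u ∈ L} |(Mσ)_u| ≥ ∑_{u ∈ L} ‖M_u‖ / √3`, and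
`‖M_u‖² = 2 deg_{H \ G} u ≤ 2d`. Hence `|E(H) \ E(G)| ≤ εdn√(6d)`: all graphs sketched by one
`f` are obtained from one of them by keeping a subset of its `dn/2` edges and adding at most
`εdn√(6d)` others, which leaves at most `2^(dn/2) · n^(2εdn√(6d))` graphs per sketch.
-/

open Finset

lemma sum_sq_pow_three_le {ι : Type*} (s : Finset ι) (a : ι → ℝ) :
    (∑ i ∈ s, a i ^ 2) ^ 3 ≤ (∑ i ∈ s, |a i|) ^ 2 * ∑ i ∈ s, a i ^ 4 := by
  set S₁ := ∑ i ∈ s, |a i|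
  set S₂ := ∑ i ∈ s, a i ^ 2
  set S₃ := ∑ i ∈ s, |a i| ^ 3
  set S₄ := ∑ i ∈ s, a i ^ 4
  have h₁₃ : S₂ ^ 2 ≤ S₁ * S₃ := sum_sq_le_sum_mul_sum_of_sq_le_mul s
    (fun i _ => abs_nonneg _) (fun i _ => by positivity) fun i _ =>
      le_of_eq <| by rw [← sq_abs (a i)]; ring
  have h₂₄ : S₃ ^ 2 ≤ S₂ * S₄ := sum_sq_le_sum_mul_sum_of_sq_le_mul s
    (fun i _ => sq_nonneg _) (fun i _ => by positivity) fun i _ =>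
      le_of_eq <| by rw [show a i ^ 4 = (a i ^ 2) ^ 2 by ring, ← sq_abs (a i)]; ring
  have hS₂ : 0 ≤ S₂ := sum_nonneg fun i _ => sq_nonneg _
  have : S₂ * S₂ ^ 3 ≤ S₂ * (S₁ ^ 2 * S₄) := calc
    S₂ * S₂ ^ 3 = (S₂ ^ 2) ^ 2 := by ring
    _ ≤ (S₁ * S₃) ^ 2 := by gcongr
    _ = S₁ ^ 2 * S₃ ^ 2 := by ring
    _ ≤ S₁ ^ 2 * (S₂ * S₄) := by gcongr
    _ = S₂ * (S₁ ^ 2 * S₄) := by ring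
  rcases hS₂.eq_or_lt with h | h
  · rw [← h, zero_pow three_ne_zero]
    exact mul_nonneg (sq_nonneg _) (sum_nonneg fun i _ => by positivity)
  · exact le_of_mul_le_mul_left this h

def boolSign (b : Bool) : ℝ := if b then 1 else -1

lemma boolSign_eq_one_or (b : Bool) : boolSign b = 1 ∨ boolSign b = -1 := by
  cases b <;> simp [boolSign]

section Rademacher

variable {N : ℕ}

lemma sum_dotProduct_boolSign_succ (φ : ℝ → ℝ) (c : Fin (N + 1) → ℝ) :
    ∑ b : Fin (N + 1) → Bool, φ (c ⬝ᵥ fun i => boolSign (b i)) =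
      ∑ t : Fin N → Bool, (φ (c 0 + Fin.tail c ⬝ᵥ fun i => boolSign (t i)) +
        φ (-c 0 + Fin.tail c ⬝ᵥ fun i => boolSign (t i))) := by
  rw [← (Fin.consEquiv fun _ => Bool).sum_comp, Fintype.sum_prod_type, Finset.sum_comm]
  refine sum_congr rfl fun t _ => ?_
  simp [dotProduct, Fin.sum_univ_succ, boolSign, Fin.tail]

lemma sum_dotProduct_boolSign_sq (c : Fin N → ℝ) :
    ∑ b : Fin N → Bool, (c ⬝ᵥ fun i => boolSign (b i)) ^ 2 = 2 ^ N * ∑ i, c i ^ 2 := by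
  induction N with
  | zero => simp
  | succ N ih =>
    rw [sum_dotProduct_boolSign_succ (· ^ 2)]
    have key : ∀ a s : ℝ, (a + s) ^ 2 + (-a + s) ^ 2 = 2 * s ^ 2 + 2 * a ^ 2 := by
      intros; ring
    simp only [key, sum_add_distrib, ← mul_sum, ih, sum_const, card_univ, Fintype.card_fun,
      Fintype.card_bool, Fintype.card_fin, nsmul_eq_mul, Fin.sum_univ_succ (fun i => c i ^ 2)]
    push_cast
    simp only [Fin.tail]
    ring

lemma sum_dotProduct_boolSign_pow_four_le (c : Fin N → ℝ) :
    ∑ b : Fin N → Bool, (c ⬝ᵥ fun i => boolSign (b i)) ^ 4 ≤ 3 * 2 ^ N * (∑ i, c i ^ 2) ^ 2 := by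
  induction N with
  | zero => simp
  | succ N ih =>
    rw [sum_dotProduct_boolSign_succ (· ^ 4)]
    have key : ∀ a s : ℝ,
        (a + s) ^ 4 + (-a + s) ^ 4 = 2 * s ^ 4 + 12 * a ^ 2 * s ^ 2 + 2 * a ^ 4 := by
      intros; ring
    have h4 := ih (Fin.tail c)
    simp only [key, sum_add_distrib, ← mul_sum, sum_dotProduct_boolSign_sq, sum_const, card_univ,
      Fintype.card_fun, Fintype.card_bool, Fintype.card_fin, nsmul_eq_mul,
      Fin.sum_univ_succ (fun i => c i ^ 2)]
    rw [pow_succ (2 : ℝ) N]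
    generalize ∑ b : Fin N → Bool, (Fin.tail c ⬝ᵥ fun i => boolSign (b i)) ^ 4 = T at h4 ⊢
    rw [show ∑ i, Fin.tail c i ^ 2 = ∑ i : Fin N, c i.succ ^ 2 from rfl] at h4 ⊢
    have hS : 0 ≤ ∑ i : Fin N, c i.succ ^ 2 := sum_nonneg fun _ _ => sq_nonneg _
    have h2 : (0 : ℝ) < 2 ^ N := by positivity
    push_cast
    nlinarith [mul_nonneg (mul_nonneg h2.le (sq_nonneg (c 0))) hS,
      mul_nonneg h2.le (pow_nonneg (sq_nonneg (c 0)) 2)]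

-- Khintchine's inequality for the first moment, via `sum_sq_pow_three_le`.
lemma two_pow_mul_sqrt_sum_sq_le (c : Fin N → ℝ) :
    2 ^ N * √(∑ i, c i ^ 2) ≤ √3 * ∑ b : Fin N → Bool, |c ⬝ᵥ fun i => boolSign (b i)| := by
  set s := ∑ i, c i ^ 2
  set S₁ := ∑ b : Fin N → Bool, |c ⬝ᵥ fun i => boolSign (b i)|
  have hs : 0 ≤ s := sum_nonneg fun i _ => sq_nonneg _
  have hHolder := sum_sq_pow_three_le univ fun b : Fin N → Bool => c ⬝ᵥ fun i => boolSign (b i)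
  rw [sum_dotProduct_boolSign_sq] at hHolder
  have h4 := sum_dotProduct_boolSign_pow_four_le c
  have key : (2 ^ N) ^ 2 * s ≤ 3 * S₁ ^ 2 := by
    rcases hs.eq_or_lt with h | h
    · rw [← h, mul_zero]; positivity
    · have : 2 ^ N * s ^ 2 * ((2 ^ N) ^ 2 * s) ≤ 2 ^ N * s ^ 2 * (3 * S₁ ^ 2) := by
        nlinarith [mul_le_mul_of_nonneg_left h4 (sq_nonneg S₁)]
      exact le_of_mul_le_mul_left this (by positivity)
  rw [← pow_le_pow_iff_left₀ (by positivity) (by positivity) two_ne_zero]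
  simpa [mul_pow, Real.sq_sqrt hs] using key

lemma exists_sum_sqrt_le_sum_abs_mulVec {ι : Type*} (M : Matrix ι (Fin N) ℝ) (L : Finset ι) :
    ∃ b : Fin N → Bool, ∑ u ∈ L, √(∑ v, M u v ^ 2) ≤
      √3 * ∑ u ∈ L, |(M *ᵥ fun i => boolSign (b i)) u| := by
  obtain ⟨b, -, hb⟩ := exists_le_of_sum_le (s := univ) univ_nonempty (f := fun _ =>
    ∑ u ∈ L, √(∑ v, M u v ^ 2)) (g := fun b => √3 * ∑ u ∈ L, |(M *ᵥ fun i => boolSign (b i)) u|) <|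
    calc ∑ _b : Fin N → Bool, ∑ u ∈ L, √(∑ v, M u v ^ 2)
        = ∑ u ∈ L, 2 ^ N * √(∑ v, M u v ^ 2) := by simp [mul_sum]
      _ ≤ ∑ u ∈ L, √3 * ∑ b : Fin N → Bool, |M u ⬝ᵥ fun i => boolSign (b i)| :=
        sum_le_sum fun u _ => two_pow_mul_sqrt_sum_sq_le (M u)
      _ = _ := by simp only [← mul_sum]; rw [sum_comm]; rfl
  exact ⟨b, hb⟩

end Rademacher

lemma dotProduct_mulVec_eq_two_mul_sum_of_isSymm {ι R : Type*} [Fintype ι] [DecidableEq ι]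
    [CommRing R] {M : Matrix ι ι R} (hM : M.IsSymm) {L : Finset ι}
    (hML : ∀ i j, (i ∈ L ↔ j ∈ L) → M i j = 0) (x : ι → R) :
    x ⬝ᵥ (M *ᵥ x) = 2 * ∑ i ∈ L, x i * (M *ᵥ x) i := by
  have split : ∀ i j, x i * M i j * x j =
      (if i ∈ L then x i * M i j * x j else 0) + (if j ∈ L then x j * M j i * x i else 0) := by
    intro i j
    by_cases hi : i ∈ L <;> by_cases hj : j ∈ L <;>
      simp [hi, hj, hML i j, hM.apply i j, mul_comm, mul_left_comm]
  calc x ⬝ᵥ (M *ᵥ x) = ∑ i, ∑ j, x i * M i j * x j := by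
        simp [dotProduct, mulVec, mul_sum, mul_assoc]
    _ = 2 * ∑ i ∈ L, x i * (M *ᵥ x) i := by
      rw [sum_congr rfl fun i _ => sum_congr rfl fun j _ => split i j]
      simp only [sum_add_distrib]
      rw [sum_comm (f := fun i j => if j ∈ L then x j * M j i * x i else 0), ← two_mul]
      simp [dotProduct, mulVec, mul_sum, mul_assoc]

lemma two_mul_sum_sqrt_sum_sq_le {N : ℕ} {M : Matrix (Fin N) (Fin N) ℝ} (hM : M.IsSymm)
    {L : Finset (Fin N)} (hML : ∀ i j, (i ∈ L ↔ j ∈ L) → M i j = 0) {C : ℝ}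
    (hC : ∀ x : Fin N → ℝ, (∀ i, x i = 1 ∨ x i = -1) → x ⬝ᵥ (M *ᵥ x) ≤ C) :
    2 * ∑ u ∈ L, √(∑ v, M u v ^ 2) ≤ √3 * C := by
  obtain ⟨b, hb⟩ := exists_sum_sqrt_le_sum_abs_mulVec M L
  set y := M *ᵥ fun i => boolSign (b i)
  set x : Fin N → ℝ := fun i => if i ∈ L then (if 0 ≤ y i then 1 else -1) else boolSign (b i)
  have hx : ∀ i, x i = 1 ∨ x i = -1 := fun i => by
    by_cases hi : i ∈ L
    · by_cases hy : 0 ≤ y i <;> simp [x, hi, hy]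
    · simpa [x, hi] using boolSign_eq_one_or (b i)
  have hMx : ∀ u ∈ L, x u * (M *ᵥ x) u = |y u| := fun u hu => by
    have : (M *ᵥ x) u = y u := by
      simp only [y, mulVec, dotProduct]
      refine sum_congr rfl fun v _ => ?_
      by_cases hv : v ∈ L
      · simp [hML u v (iff_of_true hu hv)]
      · simp [x, hv]
    by_cases hy : 0 ≤ y u
    · simp [this, x, hu, hy, abs_of_nonneg hy]
    · simp [this, x, hu, hy, abs_of_neg (not_le.mp hy)]
  have hxMx := hC x hx
  rw [dotProduct_mulVec_eq_two_mul_sum_of_isSymm hM hML, sum_congr rfl hMx] at hxMx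
  nlinarith [Real.sqrt_nonneg 3]

lemma card_filter_powerset_card_le_le {α : Type*} [DecidableEq α] (s : Finset α) (J : ℕ) :
    #{t ∈ s.powerset | #t ≤ J} ≤ (#s + 1) ^ J := by
  induction J with
  | zero =>
    refine (card_le_card fun t ht => ?_).trans (card_singleton (∅ : Finset α)).le
    simp_all
  | succ J ih =>
    set small := {t ∈ s.powerset | #t ≤ J}
    have hsub : {t ∈ s.powerset | #t ≤ J + 1} ⊆
        small ∪ (s ×ˢ small).image fun p => insert p.1 p.2 := by
      intro t ht
      simp only [mem_filter, mem_powerset] at ht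
      rcases Nat.lt_or_ge #t (J + 1) with h | h
      · exact mem_union_left _ (mem_filter.mpr ⟨mem_powerset.mpr ht.1, by omega⟩)
      · obtain ⟨a, ha⟩ : t.Nonempty := card_pos.mp (by omega)
        refine mem_union_right _ (mem_image.mpr ⟨(a, t.erase a), ?_, insert_erase ha⟩)
        simp only [mem_product, mem_filter, mem_powerset, card_erase_of_mem ha, small]
        exact ⟨ht.1 ha, (erase_subset a t).trans ht.1, by omega⟩
    calc #{t ∈ s.powerset | #t ≤ J + 1}
        ≤ #small + #s * #small := by
          refine (card_le_card hsub).trans ((card_union_le _ _).trans ?_)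
          rw [← card_product]
          gcongr
          exact card_image_le
      _ = (#s + 1) * #small := by ring
      _ ≤ (#s + 1) ^ (J + 1) := by rw [pow_succ']; gcongr

lemma Fintype.card_sym2_add_one_le {V : Type*} [Fintype V] (hV : 2 ≤ Fintype.card V) :
    Fintype.card (Sym2 V) + 1 ≤ Fintype.card V ^ 2 := by
  rw [Sym2.card, Nat.choose_two_right, Nat.add_sub_cancel, Nat.add_one_le_iff,
    Nat.div_lt_iff_lt_mul two_pos]
  nlinarith

namespace SimpleGraph

variable {V : Type*} [Fintype V] [DecidableEq V] {G H : SimpleGraph V} [DecidableRel G.Adj]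
  [DecidableRel H.Adj]

lemma degree_sdiff_eq_degree_sdiff {v : V} (h : G.degree v = H.degree v) :
    (H \ G).degree v = (G \ H).degree v := by
  have hG := card_sdiff_add_card_inter (G.neighborFinset v) (H.neighborFinset v)
  have hH := card_sdiff_add_card_inter (H.neighborFinset v) (G.neighborFinset v)
  rw [inter_comm, card_neighborFinset_eq_degree] at hH
  rw [card_neighborFinset_eq_degree] at hG
  simp only [← card_neighborFinset_eq_degree, neighborFinset_sdiff]
  omega

lemma sum_sq_adjMatrix_sub_adjMatrix {v : V} (h : G.degree v = H.degree v) :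
    ∑ w, (H.adjMatrix ℝ v w - G.adjMatrix ℝ v w) ^ 2 = 2 * (H \ G).degree v := by
  have pointwise : ∀ w, (H.adjMatrix ℝ v w - G.adjMatrix ℝ v w) ^ 2 =
      (if (H \ G).Adj v w then 1 else 0) + (if (G \ H).Adj v w then 1 else 0) := by
    intro w
    by_cases hG : G.Adj v w <;> by_cases hH : H.Adj v w <;> simp [hG, hH]
  rw [sum_congr rfl fun w _ => pointwise w, sum_add_distrib, ← degree_eq_sum_if_adj,
    ← degree_eq_sum_if_adj, degree_sdiff_eq_degree_sdiff h]
  ring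

open Classical in
lemma card_le_of_card_edgeFinset_sdiff_le (S : Finset (SimpleGraph V)) {m J : ℕ}
    (hm : ∀ G ∈ S, #G.edgeFinset = m)
    (hJ : ∀ G ∈ S, ∀ H ∈ S, #(H.edgeFinset \ G.edgeFinset) ≤ J) :
    #S ≤ 2 ^ m * (Fintype.card (Sym2 V) + 1) ^ J := by
  rcases S.eq_empty_or_nonempty with rfl | ⟨G₀, hG₀⟩
  · simp
  let code (H : SimpleGraph V) := (H.edgeFinset ∩ G₀.edgeFinset, H.edgeFinset \ G₀.edgeFinset)
  have hmaps : ∀ H ∈ S, code H ∈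
      G₀.edgeFinset.powerset ×ˢ {t ∈ (univ : Finset (Sym2 V)).powerset | #t ≤ J} :=
    fun H hH => by simp [code, hJ G₀ hG₀ H hH]
  have hinj : Set.InjOn code S := fun H₁ _ H₂ _ h => by
    simp only [code, Prod.mk.injEq] at h
    rw [← SimpleGraph.edgeFinset_inj, ← sdiff_union_inter H₁.edgeFinset G₀.edgeFinset,
      ← sdiff_union_inter H₂.edgeFinset G₀.edgeFinset, h.1, h.2]
  calc #S ≤ #(G₀.edgeFinset.powerset ×ˢ {t ∈ (univ : Finset (Sym2 V)).powerset | #t ≤ J}) :=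
        card_le_card_of_injOn code hmaps hinj
    _ ≤ 2 ^ m * (Fintype.card (Sym2 V) + 1) ^ J := by
        rw [card_product, card_powerset, hm G₀ hG₀]
        gcongr
        exact card_filter_powerset_card_le_le _ J

end SimpleGraph

section

variable {n d : ℕ} {G H : SimpleGraph (Fin n)} {x : Fin n → ℝ}

lemma isRegOfDeg_iff [DecidableRel G.Adj] : IsRegOfDeg G d ↔ G.IsRegularOfDegree d := by
  unfold IsRegOfDeg; convert Iff.rfl

lemma lapQuadForm_eq [DecidableRel G.Adj] (x : Fin n → ℝ) :
    lapQuadForm G x = x ⬝ᵥ (G.lapMatrix ℝ *ᵥ x) := by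
  unfold lapQuadForm; convert rfl

lemma isBipartiteWith_iff {L : Finset (Fin n)} :
    IsBipartiteWith G L ↔ G.IsBipartiteWith ↑L ↑Lᶜ := by
  refine ⟨fun h => ⟨by rw [coe_compl]; exact disjoint_compl_right, fun u v huv => ?_⟩,
    fun h u v huv => ?_⟩
  · have := h u v huv; simp only [mem_coe, coe_compl, Set.mem_compl_iff] at this ⊢; tauto
  · have := h.mem_of_adj huv; simp only [mem_coe, coe_compl, Set.mem_compl_iff] at this ⊢; tauto

lemma IsRegOfDeg.two_mul_card_edgeFinset [DecidableRel G.Adj] (hG : IsRegOfDeg G d) :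
    2 * #G.edgeFinset = d * n := by
  rw [← G.sum_degrees_eq_twice_card_edges, sum_congr rfl fun v _ => isRegOfDeg_iff.mp hG v]
  simp [mul_comm]

def IsCutSketch (ε : ℝ) (f : (Fin n → ℝ) → ℝ) (G : SimpleGraph (Fin n)) : Prop :=
  ∀ x : Fin n → ℝ, (∀ i, x i = 1 ∨ x i = -1) →
    (1 - ε) * lapQuadForm G x ≤ f x ∧ f x ≤ (1 + ε) * lapQuadForm G x

variable [DecidableRel G.Adj] [DecidableRel H.Adj]

lemma lapQuadForm_eq_sub_adjMatrix (hG : IsRegOfDeg G d) (hx : ∀ i, x i = 1 ∨ x i = -1) :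
    lapQuadForm G x = d * n - x ⬝ᵥ (G.adjMatrix ℝ *ᵥ x) := by
  rw [lapQuadForm_eq, SimpleGraph.lapMatrix, sub_mulVec, dotProduct_sub,
    SimpleGraph.dotProduct_mulVec_degMatrix]
  have hsq : ∀ i, (G.degree i : ℝ) * x i * x i = d := fun i => by
    rw [isRegOfDeg_iff.mp hG i]; rcases hx i with h | h <;> simp [h]
  rw [sum_congr rfl fun i _ => hsq i]
  simp [mul_comm]

lemma lapQuadForm_le (hG : IsRegOfDeg G d) (hx : ∀ i, x i = 1 ∨ x i = -1) :
    lapQuadForm G x ≤ 2 * d * n := by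
  have habs : ∀ i, |x i| = 1 := fun i => by rcases hx i with h | h <;> simp [h]
  have hterm : ∀ i, -(d : ℝ) ≤ x i * (G.adjMatrix ℝ *ᵥ x) i := fun i => by
    have hrow : |(G.adjMatrix ℝ *ᵥ x) i| ≤ d := by
      rw [SimpleGraph.adjMatrix_mulVec_apply]
      refine (abs_sum_le_sum_abs _ _).trans_eq ?_
      simp [habs, SimpleGraph.card_neighborFinset_eq_degree, isRegOfDeg_iff.mp hG i]
    have := neg_abs_le (x i * (G.adjMatrix ℝ *ᵥ x) i)
    rw [abs_mul, habs, one_mul] at this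
    linarith
  have hsum : -(d * n : ℝ) ≤ x ⬝ᵥ (G.adjMatrix ℝ *ᵥ x) := by
    calc -(d * n : ℝ) = ∑ _i : Fin n, -(d : ℝ) := by simp [mul_comm]
      _ ≤ _ := sum_le_sum fun i _ => hterm i
  rw [lapQuadForm_eq_sub_adjMatrix hG hx]
  linarith

lemma IsCutSketch.dotProduct_sub_adjMatrix_mulVec_le {ε : ℝ} (hε : 0 ≤ ε)
    {f : (Fin n → ℝ) → ℝ} (hG : IsRegOfDeg G d) (hH : IsRegOfDeg H d)
    (hfG : IsCutSketch ε f G) (hfH : IsCutSketch ε f H) (hx : ∀ i, x i = 1 ∨ x i = -1) :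
    x ⬝ᵥ ((H.adjMatrix ℝ - G.adjMatrix ℝ) *ᵥ x) ≤ 4 * ε * d * n := by
  have hQ := add_le_add (lapQuadForm_le hG hx) (lapQuadForm_le hH hx)
  rw [sub_mulVec, dotProduct_sub]
  rw [lapQuadForm_eq_sub_adjMatrix hG hx, lapQuadForm_eq_sub_adjMatrix hH hx] at hQ
  have h₁ := (hfG x hx).1
  have h₂ := (hfH x hx).2
  rw [lapQuadForm_eq_sub_adjMatrix hG hx] at h₁
  rw [lapQuadForm_eq_sub_adjMatrix hH hx] at h₂
  nlinarith [mul_le_mul_of_nonneg_left hQ hε]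

lemma card_edgeFinset_sdiff_le {ε : ℝ} (hε : 0 ≤ ε) {f : (Fin n → ℝ) → ℝ}
    {L : Finset (Fin n)} (hG : IsRegOfDeg G d) (hH : IsRegOfDeg H d)
    (hGL : IsBipartiteWith G L) (hHL : IsBipartiteWith H L)
    (hfG : IsCutSketch ε f G) (hfH : IsCutSketch ε f H) :
    (#(H.edgeFinset \ G.edgeFinset) : ℝ) ≤ ε * d * n * √(6 * d) := by
  set M := H.adjMatrix ℝ - G.adjMatrix ℝ
  have hM : M.IsSymm := (H.isSymm_adjMatrix).sub G.isSymm_adjMatrix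
  have hML : ∀ i j, (i ∈ L ↔ j ∈ L) → M i j = 0 := fun i j hij => by
    have hH' : ¬H.Adj i j := fun h => by have := hHL i j h; simp only [mem_coe] at this; tauto
    have hG' : ¬G.Adj i j := fun h => by have := hGL i j h; simp only [mem_coe] at this; tauto
    simp [M, hH', hG']
  have hsqrt := two_mul_sum_sqrt_sum_sq_le hM hML fun x hx =>
    hfG.dotProduct_sub_adjMatrix_mulVec_le hε hG hH hfH hx
  have hrow : ∀ u, ∑ v, M u v ^ 2 = 2 * (H \ G).degree u := fun u =>
    SimpleGraph.sum_sq_adjMatrix_sub_adjMatrix <| by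
      rw [isRegOfDeg_iff.mp hG u, isRegOfDeg_iff.mp hH u]
  have hrow_le : ∀ u, ∑ v, M u v ^ 2 ≤ 2 * d := fun u => by
    rw [hrow, ← isRegOfDeg_iff.mp hH u]
    gcongr
    exact SimpleGraph.degree_le_of_le sdiff_le
  have hcard : ∑ u ∈ L, ((H \ G).degree u : ℝ) = #(H.edgeFinset \ G.edgeFinset) := by
    have hbip : IsBipartiteWith (H \ G) L := fun u v huv => hHL u v huv.1
    rw [← SimpleGraph.edgeFinset_sdiff]
    norm_cast
    convert SimpleGraph.isBipartiteWith_sum_degrees_eq_card_edges (isBipartiteWith_iff.mp hbip)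
  have hle : ∀ u, ∑ v, M u v ^ 2 ≤ √(2 * d) * √(∑ v, M u v ^ 2) := fun u => by
    calc ∑ v, M u v ^ 2 = √(∑ v, M u v ^ 2) * √(∑ v, M u v ^ 2) :=
          (Real.mul_self_sqrt (sum_nonneg fun _ _ => sq_nonneg _)).symm
      _ ≤ √(2 * d) * √(∑ v, M u v ^ 2) := by gcongr; exact hrow_le u
  have h6 : √(2 * d) * √3 = √(6 * d) := by
    rw [← Real.sqrt_mul (by positivity)]; ring_nf
  calc (#(H.edgeFinset \ G.edgeFinset) : ℝ) = (∑ u ∈ L, ∑ v, M u v ^ 2) / 2 := by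
        simp [hrow, ← mul_sum, hcard]
    _ ≤ (√(2 * d) * ∑ u ∈ L, √(∑ v, M u v ^ 2)) / 2 := by
        rw [mul_sum]; gcongr with u; exact hle u
    _ ≤ ε * d * n * √(6 * d) := by
        rw [← h6]; nlinarith [Real.sqrt_nonneg (2 * d)]

end

lemma pow_floor_le_two_rpow {n d : ℕ} (hn : 1 ≤ n) {ε : ℝ} (hε : 0 ≤ ε) :
    ((n : ℝ) ^ 2) ^ ⌊ε * d * n * √(6 * d)⌋₊ ≤
      2 ^ (9 * (d : ℝ) ^ ((3 : ℝ) / 2) * ε * n * Real.logb 2 n) := by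
  have hn' : (1 : ℝ) ≤ n := by exact_mod_cast hn
  have hd : (d : ℝ) ^ ((3 : ℝ) / 2) = d * √d := by
    rw [Real.sqrt_eq_rpow, ← Real.rpow_one_add' (Nat.cast_nonneg d) (by norm_num)]
    norm_num
  have hfloor : (⌊ε * d * n * √(6 * d)⌋₊ : ℝ) ≤ √6 * (ε * d * √d * n) := by
    refine (Nat.floor_le (by positivity)).trans_eq ?_
    rw [Real.sqrt_mul (by norm_num)]
    ring
  have hsqrt6 : √6 ≤ 3 := Real.sqrt_le_iff.mpr ⟨by norm_num, by norm_num⟩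
  rw [mul_comm _ (Real.logb 2 n), Real.rpow_mul zero_le_two,
    Real.rpow_logb two_pos (by norm_num) (by positivity), ← pow_mul, ← Real.rpow_natCast]
  refine Real.rpow_le_rpow_of_exponent_le hn' ?_
  rw [hd]
  push_cast
  nlinarith [mul_le_mul_of_nonneg_right hsqrt6 (by positivity : 0 ≤ ε * d * √d * n)]

open Classical in
lemma card_filter_isCutSketch_le {n d : ℕ} (hn : 2 ≤ n) {ε : ℝ} (hε : 0 ≤ ε)
    (f : (Fin n → ℝ) → ℝ) {L : Finset (Fin n)} (S : Finset (SimpleGraph (Fin n)))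
    (hS : ∀ G ∈ S, IsRegOfDeg G d ∧ IsBipartiteWith G L) :
    (#{G ∈ S | IsCutSketch ε f G} : ℝ) ≤
      2 ^ ((d : ℝ) * n / 2) * 2 ^ (9 * (d : ℝ) ^ ((3 : ℝ) / 2) * ε * n * Real.logb 2 n) := by
  have hdist : ∀ G ∈ S.filter (IsCutSketch ε f), ∀ H ∈ S.filter (IsCutSketch ε f),
      #(H.edgeFinset \ G.edgeFinset) ≤ ⌊ε * d * n * √(6 * d)⌋₊ := by
    intro G hG H hH
    simp only [mem_filter] at hG hH
    apply Nat.le_floor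
    exact card_edgeFinset_sdiff_le hε (hS G hG.1).1 (hS H hH.1).1
      (hS G hG.1).2 (hS H hH.1).2 hG.2 hH.2
  have hcount := SimpleGraph.card_le_of_card_edgeFinset_sdiff_le (S.filter (IsCutSketch ε f))
    (m := d * n / 2)
    (fun G hG => by
      have := (hS G (mem_filter.mp hG).1).1.two_mul_card_edgeFinset
      omega) hdist
  have hsym2 : (Fintype.card (Sym2 (Fin n)) + 1 : ℝ) ≤ (n : ℝ) ^ 2 := by
    exact_mod_cast Fintype.card_fin n ▸ Fintype.card_sym2_add_one_le (by simpa using hn)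
  have hedges : (2 : ℝ) ^ (d * n / 2) ≤ 2 ^ ((d : ℝ) * n / 2) := by
    rw [← Real.rpow_natCast]
    exact Real.rpow_le_rpow_of_exponent_le one_le_two (by exact_mod_cast Nat.cast_div_le)
  calc (#{G ∈ S | IsCutSketch ε f G} : ℝ)
      ≤ 2 ^ (d * n / 2) * (Fintype.card (Sym2 (Fin n)) + 1) ^ ⌊ε * d * n * √(6 * d)⌋₊ := by
        exact_mod_cast hcount
    _ ≤ 2 ^ ((d : ℝ) * n / 2) * ((n : ℝ) ^ 2) ^ ⌊ε * d * n * √(6 * d)⌋₊ := by gcongr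
    _ ≤ _ := by gcongr; exact pow_floor_le_two_rpow (by omega) hε

theorem cut_sketch_family_lower_bound_general (n d : ℕ) (hn : 2 ≤ n) (ε : ℝ) (hε : 0 < ε)
    (L : Finset (Fin n)) (ℱ : Finset ((Fin n → ℝ) → ℝ))
    (hcover : ∀ G : SimpleGraph (Fin n),
      IsRegOfDeg G d → IsBipartiteWith G (↑L : Set (Fin n)) →
      ∃ f ∈ ℱ, ∀ x : Fin n → ℝ, (∀ i, x i = 1 ∨ x i = -1) →
        (1 - ε) * lapQuadForm G x ≤ f x ∧ f x ≤ (1 + ε) * lapQuadForm G x) :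
    ((Set.ncard {G : SimpleGraph (Fin n) | IsRegOfDeg G d ∧
        IsBipartiteWith G (↑L : Set (Fin n))}) : ℝ) /
        2 ^ ((d : ℝ) * n / 2 + 9 * (d : ℝ) ^ ((3 : ℝ) / 2) * ε * n * Real.logb 2 n) ≤
      (ℱ.card : ℝ) := by
  classical
  set B := {G : SimpleGraph (Fin n) | IsRegOfDeg G d ∧ IsBipartiteWith G L}.toFinset
  have hB : B ⊆ ℱ.biUnion fun f => {G ∈ B | IsCutSketch ε f G} := fun G hG => by
    obtain ⟨f, hf, hfG⟩ := hcover G (Set.mem_toFinset.mp hG).1 (Set.mem_toFinset.mp hG).2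
    exact mem_biUnion.mpr ⟨f, hf, mem_filter.mpr ⟨hG, hfG⟩⟩
  rw [Set.ncard_eq_toFinset_card', div_le_iff₀ (by positivity), Real.rpow_add two_pos]
  calc (#B : ℝ) ≤ ∑ f ∈ ℱ, (#{G ∈ B | IsCutSketch ε f G} : ℝ) := by
        exact_mod_cast (card_le_card hB).trans card_biUnion_le
    _ ≤ #ℱ * (2 ^ ((d : ℝ) * n / 2) *
          2 ^ (9 * (d : ℝ) ^ ((3 : ℝ) / 2) * ε * n * Real.logb 2 n)) := by
        rw [← nsmul_eq_mul]
        exact sum_le_card_nsmul _ _ _ fun f _ => card_filter_isCutSketch_le (L := L) hn hε.le f B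
          fun G hG => by simpa [B] using hG

/-- If every simple `d`-regular bipartite graph on `n` labelled vertices with a fixed
balanced bipartition (`B_{n,d}`) has an `ε`-cut sketch in a family `ℱ` of functions
`{-1,1}ⁿ → ℝ`, then `|ℱ| ≥ |B_{n,d}| / 2^(dn/2 + 9d^(3/2)εn log₂ n)`. -/
theorem cut_sketch_family_lower_bound (n d : ℕ) (hn : 2 ≤ n) (hneven : Even n)
    (hd : 1 ≤ d) (ε : ℝ) (hε : 0 < ε) (hε' : ε ≤ 1 / 3)
    (L : Finset (Fin n)) (hL : L.card = n / 2)
    (ℱ : Finset ((Fin n → ℝ) → ℝ))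
    (hcover : ∀ G : SimpleGraph (Fin n),
      IsRegOfDeg G d → IsBipartiteWith G (↑L : Set (Fin n)) →
      ∃ f ∈ ℱ, ∀ x : Fin n → ℝ, (∀ i, x i = 1 ∨ x i = -1) →
        (1 - ε) * lapQuadForm G x ≤ f x ∧ f x ≤ (1 + ε) * lapQuadForm G x) :
    ((Set.ncard {G : SimpleGraph (Fin n) | IsRegOfDeg G d ∧
        IsBipartiteWith G (↑L : Set (Fin n))}) : ℝ) /
        2 ^ ((d : ℝ) * n / 2 + 9 * (d : ℝ) ^ ((3 : ℝ) / 2) * ε * n * Real.logb 2 n) ≤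
      (ℱ.card : ℝ) :=
  cut_sketch_family_lower_bound_general n d hn ε hε L ℱ hcover
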